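/- arXiv:2602.16531 — 2 statements merged into one kernel-verified Lean document; each statement's English description precedes it below -/
import Mathlib

section
/- Let λ_1,…,λ_d ≥ 0 be fixed nonnegative reals, let n ≥ 1, m ≥ 1, and let A > 0, σ² > 0. Define E(α) = Σ_{k=1}^d (σ² λ_k + n² α² A) / (λ_k + n m α)² for α > 0. Then the derivative of E with respect to α equals 2n(nαA − mσ²) · Σ_{k=1}^d λ_k / (λ_k + nmα)³; in particular, if not all λ_k are zero, E has a unique critical point at α* = mσ²/(nA), which is a global minimum on (0,∞). -/
/-!
Each summand `(σ²λ + n²α²A) / (λ + nmα)²` is handled separately. Its derivative is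
`2nλ(nαA - mσ²) / (λ + nmα)³`, whose sign is that of `α - α*`. At `α*` the relation
`nα*A = mσ²` collapses the summand to `σ² / (λ + nmα*)`, and clearing denominators
the excess of the summand at `α` over this value is `n²Aλ(α - α*)² / ((λ + nmα)²(λ + nmα*))`.
-/

open Finset

section RidgeSummand

variable (s r t a l : ℝ)

theorem hasDerivAt_ridge_summand {α : ℝ} (hα : l + r * t * α ≠ 0) :
    HasDerivAt (fun α => (s * l + r ^ 2 * α ^ 2 * a) / (l + r * t * α) ^ 2)
      (2 * r * (r * α * a - t * s) * (l / (l + r * t * α) ^ 3)) α := by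
  have hnum : HasDerivAt (fun α => s * l + r ^ 2 * α ^ 2 * a) (r ^ 2 * (2 * α) * a) α := by
    simpa using (((hasDerivAt_pow 2 α).const_mul (r ^ 2)).mul_const a).const_add (s * l)
  have hlin : HasDerivAt (fun α => l + r * t * α) (r * t) α := by
    simpa using ((hasDerivAt_id α).const_mul (r * t)).const_add l
  refine (hnum.div (hlin.fun_pow 2) (pow_ne_zero 2 hα)).congr_deriv ?_
  rw [mul_div_assoc', div_eq_div_iff (by positivity) (by positivity)]
  push_cast
  ring

variable {s r t a l}

theorem ridge_summand_le_of_opt {α b : ℝ} (hb : r * a * b = t * s) (hl : 0 ≤ l) (ha : 0 ≤ a)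
    (hα : 0 < l + r * t * α) (hbpos : 0 < l + r * t * b) :
    (s * l + r ^ 2 * b ^ 2 * a) / (l + r * t * b) ^ 2
      ≤ (s * l + r ^ 2 * α ^ 2 * a) / (l + r * t * α) ^ 2 := by
  have hopt : (s * l + r ^ 2 * b ^ 2 * a) / (l + r * t * b) ^ 2 = s / (l + r * t * b) := by
    rw [div_eq_div_iff (by positivity) hbpos.ne']
    linear_combination (r * b) * (l + r * t * b) * hb
  have hexcess : (s * l + r ^ 2 * α ^ 2 * a) * (l + r * t * b) - s * (l + r * t * α) ^ 2
      = r ^ 2 * a * l * (α - b) ^ 2 := by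
    linear_combination (r * (2 * α - b) * l + r ^ 2 * t * α ^ 2) * hb
  rw [hopt, div_le_div_iff₀ hbpos (by positivity)]
  nlinarith [mul_nonneg (mul_nonneg (mul_nonneg (sq_nonneg r) ha) hl) (sq_nonneg (α - b))]

end RidgeSummand

/-- Derivative of the transfer-learning test error in the hyperparameter `α`,
and the resulting unique critical point / global minimum at `α* = mσ²/(nA)`. -/
theorem stmt_4 {d n m : ℕ} (hn : 1 ≤ n) (hm : 1 ≤ m)
    (lam : Fin d → ℝ) (hlam : ∀ k, 0 ≤ lam k)
    (A σ2 : ℝ) (hA : 0 < A) (hσ : 0 < σ2)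
    (E : ℝ → ℝ)
    (hE : ∀ α, E α = ∑ k, (σ2 * lam k + (n : ℝ) ^ 2 * α ^ 2 * A) /
      (lam k + (n : ℝ) * (m : ℝ) * α) ^ 2) :
    (∀ α : ℝ, 0 < α → HasDerivAt E
        (2 * (n : ℝ) * ((n : ℝ) * α * A - (m : ℝ) * σ2) *
          ∑ k, lam k / (lam k + (n : ℝ) * (m : ℝ) * α) ^ 3) α) ∧
    ((∃ k, lam k ≠ 0) →
      (∀ α : ℝ, 0 < α → E ((m : ℝ) * σ2 / ((n : ℝ) * A)) ≤ E α) ∧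
      (∀ α : ℝ, 0 < α →
        (2 * (n : ℝ) * ((n : ℝ) * α * A - (m : ℝ) * σ2) *
            ∑ k, lam k / (lam k + (n : ℝ) * (m : ℝ) * α) ^ 3 = 0
          ↔ α = (m : ℝ) * σ2 / ((n : ℝ) * A)))) := by
  have hn' : (0 : ℝ) < n := by exact_mod_cast hn
  have hm' : (0 : ℝ) < m := by exact_mod_cast hm
  have hden : ∀ α : ℝ, 0 < α → ∀ k, 0 < lam k + n * m * α := fun α hα k => by
    have := hlam k; positivity
  rw [show E = _ from funext hE]
  refine ⟨fun α hα => ?_, fun ⟨k₀, hk₀⟩ => ⟨fun α hα => ?_, fun α hα => ?_⟩⟩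
  · rw [mul_sum]
    exact HasDerivAt.fun_sum fun k _ =>
      hasDerivAt_ridge_summand σ2 n m A (lam k) (hden α hα k).ne'
  · have hopt : (n : ℝ) * A * (m * σ2 / (n * A)) = m * σ2 := by field_simp
    exact sum_le_sum fun k _ => ridge_summand_le_of_opt hopt (hlam k) hA.le (hden α hα k)
      (hden _ (by positivity) k)
  · have hS : 0 < ∑ k, lam k / (lam k + n * m * α) ^ 3 := by
      refine sum_pos' (fun k _ => div_nonneg (hlam k) (pow_pos (hden α hα k) 3).le)
        ⟨k₀, mem_univ _, div_pos ((hlam k₀).lt_of_ne' hk₀) (pow_pos (hden α hα k₀) 3)⟩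
    rw [mul_eq_zero, or_iff_left hS.ne', mul_eq_zero, or_iff_right (by positivity),
      sub_eq_zero, eq_div_iff (by positivity)]
    constructor <;> intro h <;> linarith
end

section
/- Let b, σ_η², σ_ξ² > 0 and integers d ≥ ñ + 2 ≥ 3. Define C_deb = (ñ/d)·((1 − ñ/d)·(b/d) + σ_η²/d + σ_ξ²/(d − ñ − 1)). Then C_deb > 0, and for λ_1,…,λ_d ≥ 0 not all zero, n ≥ 1, m ≥ 1, σ_ε² > 0, the function α ↦ Σ_{k=1}^d (σ_ε² λ_k + n²α² m (ñ²/d²) C_deb)/(λ_k + nα m (ñ²/d²))² on (0,∞) attains its unique minimum at α_deb = σ_ε²/(n C_deb), where its value is σ_ε² Σ_{k=1}^d 1/(λ_k + n α_deb m ñ²/d²). -/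
open Finset

lemma aux_split (σ a lamk t t' : ℝ) (hl : 0 ≤ lamk) (ht : 0 < t) (ht' : 0 < t')
    (hat : a * t' = σ) :
    (σ * lamk + a * t ^ 2) / (lamk + t) ^ 2 =
      σ * (1 / (lamk + t')) + a * lamk * (t - t') ^ 2 / ((lamk + t) ^ 2 * (lamk + t')) := by
  have h1 : lamk + t ≠ 0 := by positivity
  have h2 : lamk + t' ≠ 0 := by positivity
  subst hat
  field_simp
  ring

/-- Positivity of `C_deb` and the unique optimal hyperparameter
`α_deb = σ_ε²/(n C_deb)` of the debiased transfer learning error, together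
with the value of the error at the optimum. -/
theorem stmt_18 {d ntil n m : ℕ} (hn : 1 ≤ n) (hm : 1 ≤ m) (hntil : 1 ≤ ntil)
    (hd : ntil + 2 ≤ d)
    (b ση2 σξ2 σε2 : ℝ) (hb : 0 < b) (hη : 0 < ση2) (hξ : 0 < σξ2)
    (hε : 0 < σε2)
    (lam : Fin d → ℝ) (hlam : ∀ k, 0 ≤ lam k) (hlamnz : ∃ k, lam k ≠ 0)
    (Cdeb : ℝ)
    (hC : Cdeb = ((ntil : ℝ) / d) *
      ((1 - (ntil : ℝ) / d) * (b / d) + ση2 / d + σξ2 / ((d : ℝ) - ntil - 1)))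
    (f : ℝ → ℝ)
    (hf : ∀ α, f α = ∑ k,
      (σε2 * lam k + (n : ℝ) ^ 2 * α ^ 2 * (m : ℝ) * ((ntil : ℝ) ^ 2 / (d : ℝ) ^ 2) * Cdeb)
        / (lam k + (n : ℝ) * α * (m : ℝ) * ((ntil : ℝ) ^ 2 / (d : ℝ) ^ 2)) ^ 2)
    (αdeb : ℝ) (hαdeb : αdeb = σε2 / ((n : ℝ) * Cdeb)) :
    0 < Cdeb ∧
    (∀ α, 0 < α → f αdeb ≤ f α) ∧
    (∀ α, 0 < α → (∀ α', 0 < α' → f α ≤ f α') → α = αdeb) ∧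
    f αdeb = σε2 *
      ∑ k, 1 / (lam k + (n : ℝ) * αdeb * (m : ℝ) * (ntil : ℝ) ^ 2 / (d : ℝ) ^ 2) := by
  -- basic casts
  have hdR : ((ntil : ℝ)) + 2 ≤ (d : ℝ) := by exact_mod_cast hd
  have hntilR : (1 : ℝ) ≤ (ntil : ℝ) := by exact_mod_cast hntil
  have hdpos : (0 : ℝ) < d := by linarith
  have hnR : (1 : ℝ) ≤ (n : ℝ) := by exact_mod_cast hn
  have hmR : (1 : ℝ) ≤ (m : ℝ) := by exact_mod_cast hm
  have hC0 : 0 < Cdeb := by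
    rw [hC]
    have h1 : (0:ℝ) < (ntil : ℝ) / d := by positivity
    have h2 : (0:ℝ) < 1 - (ntil : ℝ) / d := by
      have : (ntil : ℝ) / d < 1 := (div_lt_one hdpos).mpr (by linarith)
      linarith
    have h3 : (0:ℝ) < (d : ℝ) - ntil - 1 := by linarith
    have : (0:ℝ) < (1 - (ntil : ℝ) / d) * (b / d) + ση2 / d + σξ2 / ((d : ℝ) - ntil - 1) := by
      positivity
    positivity
  -- abbreviations
  set c : ℝ := (n : ℝ) * (m : ℝ) * ((ntil : ℝ) ^ 2 / (d : ℝ) ^ 2) with hcdef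
  have hc : 0 < c := by
    have : (0:ℝ) < (ntil:ℝ) := by linarith
    positivity
  have hα0 : 0 < αdeb := by
    rw [hαdeb]; positivity
  have hat : ((n : ℝ) * Cdeb / c) * (c * αdeb) = σε2 := by
    rw [hαdeb]
    field_simp
  set a : ℝ := (n : ℝ) * Cdeb / c with hadef
  have ha0 : 0 < a := by positivity
  -- rewriting of f
  have key : ∀ α : ℝ, 0 < α →
      f α = σε2 * ∑ k, 1 / (lam k + c * αdeb)
        + ∑ k, a * lam k * (c * α - c * αdeb) ^ 2 / ((lam k + c * α) ^ 2 * (lam k + c * αdeb)) := by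
    intro α hα
    rw [hf, Finset.mul_sum, ← Finset.sum_add_distrib]
    refine Finset.sum_congr rfl (fun k _ => ?_)
    have hnum : σε2 * lam k + (n : ℝ) ^ 2 * α ^ 2 * (m : ℝ) * ((ntil : ℝ) ^ 2 / (d : ℝ) ^ 2) * Cdeb
        = σε2 * lam k + a * (c * α) ^ 2 := by
      rw [hadef, hcdef]
      field_simp
    have hden : lam k + (n : ℝ) * α * (m : ℝ) * ((ntil : ℝ) ^ 2 / (d : ℝ) ^ 2)
        = lam k + c * α := by rw [hcdef]; ring
    rw [hnum, hden]
    exact aux_split σε2 a (lam k) (c * α) (c * αdeb) (hlam k)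
      (by positivity) (by positivity) hat
  have hval : f αdeb = σε2 * ∑ k, 1 / (lam k + c * αdeb) := by
    rw [key αdeb hα0]
    simp
  have hmin : ∀ α, 0 < α → f αdeb ≤ f α := by
    intro α hα
    rw [hval, key α hα]
    have : 0 ≤ ∑ k, a * lam k * (c * α - c * αdeb) ^ 2 / ((lam k + c * α) ^ 2 * (lam k + c * αdeb)) := by
      apply Finset.sum_nonneg
      intro k _
      have h1 : (0:ℝ) < (lam k + c * α) ^ 2 * (lam k + c * αdeb) := by
        have := hlam k; positivity
      have h2 : 0 ≤ a * lam k * (c * α - c * αdeb) ^ 2 := by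
        have := hlam k; positivity
      exact div_nonneg h2 h1.le
    linarith
  refine ⟨hC0, hmin, ?_, ?_⟩
  · intro α hα hminα
    by_contra hne
    have hlt : f αdeb < f α := by
      rw [hval, key α hα]
      have hpos : 0 < ∑ k, a * lam k * (c * α - c * αdeb) ^ 2 / ((lam k + c * α) ^ 2 * (lam k + c * αdeb)) := by
        obtain ⟨k0, hk0⟩ := hlamnz
        refine Finset.sum_pos' (fun k _ => ?_) ⟨k0, Finset.mem_univ k0, ?_⟩
        · have h1 : (0:ℝ) < (lam k + c * α) ^ 2 * (lam k + c * αdeb) := by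
            have := hlam k; positivity
          have h2 : 0 ≤ a * lam k * (c * α - c * αdeb) ^ 2 := by
            have := hlam k; positivity
          exact div_nonneg h2 h1.le
        · have hlk : 0 < lam k0 := lt_of_le_of_ne (hlam k0) (Ne.symm hk0)
          have hdiff : c * α - c * αdeb ≠ 0 := by
            intro h
            apply hne
            have : c * α = c * αdeb := by linarith
            exact mul_left_cancel₀ (ne_of_gt hc) this
          have hsq : 0 < (c * α - c * αdeb) ^ 2 :=
            lt_of_le_of_ne (sq_nonneg _) (Ne.symm (pow_ne_zero 2 hdiff))
          have h1 : (0:ℝ) < (lam k0 + c * α) ^ 2 * (lam k0 + c * αdeb) := by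
            positivity
          exact div_pos (by positivity) h1
      linarith
    exact absurd (hminα αdeb hα0) (not_le.mpr hlt)
  · rw [hval]
    congr 1
    refine Finset.sum_congr rfl (fun k _ => ?_)
    congr 1
    rw [hcdef]; ring
end
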